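/- Fix a stopping time σ ∈ 𝒯 and consider, in the zero-sum case U¹ = −U² = U, the sub-game u_σ^i(ρ,τ) := E[U^i(ρ[τ],τ[ρ]) | 𝓕_σ] over strategies in 𝔗_σ := {(ρ₀,ρ₁) ∈ 𝔗 : ρ₀ ≥ σ}. Let (ρ_σ^ε, τ_σ^ε) be an ε-saddle point of the conditional Dynkin game v_σ := ess sup_{ρ₀∈𝒯_σ} ess inf_{τ₀∈𝒯_σ} E[X_{ρ₀}1_{ρ₀<τ₀} + Y_{τ₀}1_{ρ₀>τ₀} + Z_{ρ₀}1_{ρ₀=τ₀} | 𝓕_σ] (which equals the corresponding ess inf–ess sup). Then ((ρ_σ^ε, ρ_h), (τ_σ^ε, τ_h)) ∈ 𝔗_σ × 𝔗_σ is a 5ε-Nash equilibrium for the sub-game (with h small enough as in the approximation lemma). -/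

import Mathlib

/-!
Common setup for "On the non-zero-sum stopping game ending at the maximum of the stopping
strategies".  Time is indexed by `[0,∞] = ℝ≥0∞`.  Since `Ω` is at most countable and `ℙ`
charges every point, essential suprema/infima over families of stopping times coincide with
the pointwise ones, which is how they are formalized below.
-/

open MeasureTheory Filter Set
open scoped ENNReal Topology

noncomputable section

namespace StoppingGames

variable {Ω : Type*} [mΩ : MeasurableSpace Ω]

/-- `|a - b|` on `[0,∞]`, via truncated subtraction. -/
def dd (a b : ℝ≥0∞) : ℝ≥0∞ := (a - b) + (b - a)

/-- `𝒯`, the set of stopping times with values in `[0,∞]`. -/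
def ST (𝓕 : Filtration ℝ≥0∞ mΩ) : Set (Ω → ℝ≥0∞) := {τ | IsStoppingTime 𝓕 (fun ω => (τ ω : WithTop ℝ≥0∞))}

/-- `𝒯_σ`, the stopping times no less than `σ`. -/
def STge (𝓕 : Filtration ℝ≥0∞ mΩ) (σ : Ω → ℝ≥0∞) : Set (Ω → ℝ≥0∞) :=
  {τ | IsStoppingTime 𝓕 (fun ω => (τ ω : WithTop ℝ≥0∞)) ∧ ∀ ω, σ ω ≤ τ ω}

/-- `𝒯_{t+}`, the stopping times strictly greater than `t`. -/
def STgt (𝓕 : Filtration ℝ≥0∞ mΩ) (t : ℝ≥0∞) : Set (Ω → ℝ≥0∞) :=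
  {τ | IsStoppingTime 𝓕 (fun ω => (τ ω : WithTop ℝ≥0∞)) ∧ ∀ ω, t < τ ω}

/-- The class `𝕋` of jointly measurable maps `φ : [0,∞] × Ω → [0,∞]` with
`φ(t,·) ∈ 𝒯_{t+}` for every finite `t`. -/
def IsTT (𝓕 : Filtration ℝ≥0∞ mΩ) (φ : ℝ≥0∞ → Ω → ℝ≥0∞) : Prop :=
  Measurable (Function.uncurry φ) ∧ ∀ t : ℝ≥0∞, t ≠ ∞ → φ t ∈ STgt 𝓕 t

/-- A stopping strategy `ρ = (ρ₀, ρ₁) ∈ 𝔗`. -/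
def IsStrategy (𝓕 : Filtration ℝ≥0∞ mΩ) (ρ : (Ω → ℝ≥0∞) × (ℝ≥0∞ → Ω → ℝ≥0∞)) : Prop :=
  IsStoppingTime 𝓕 (fun ω => (ρ.1 ω : WithTop ℝ≥0∞)) ∧ IsTT 𝓕 ρ.2

/-- `𝔗_σ`, the stopping strategies whose first component is `≥ σ`. -/
def IsStrategyGe (𝓕 : Filtration ℝ≥0∞ mΩ) (σ : Ω → ℝ≥0∞)
    (ρ : (Ω → ℝ≥0∞) × (ℝ≥0∞ → Ω → ℝ≥0∞)) : Prop :=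
  IsStrategy 𝓕 ρ ∧ ∀ ω, σ ω ≤ ρ.1 ω

/-- `ρ[τ] = ρ₀ 1_{ρ₀ ≤ τ₀} + ρ₁(τ₀) 1_{ρ₀ > τ₀}`. -/
def play (ρ τ : (Ω → ℝ≥0∞) × (ℝ≥0∞ → Ω → ℝ≥0∞)) : Ω → ℝ≥0∞ := fun ω =>
  if ρ.1 ω ≤ τ.1 ω then ρ.1 ω else ρ.2 (τ.1 ω) ω

/-- `u(ρ,τ) = E[U(ρ[τ], τ[ρ])]`. -/
def payoff (μ : Measure Ω) (U : ℝ≥0∞ → ℝ≥0∞ → Ω → ℝ)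
    (ρ τ : (Ω → ℝ≥0∞) × (ℝ≥0∞ → Ω → ℝ≥0∞)) : ℝ :=
  ∫ ω, U (play ρ τ ω) (play τ ρ ω) ω ∂μ

/-- `u_σ(ρ,τ) = E[U(ρ[τ], τ[ρ]) | m]`. -/
def condPayoff (μ : Measure Ω) (m : MeasurableSpace Ω) (U : ℝ≥0∞ → ℝ≥0∞ → Ω → ℝ)
    (ρ τ : (Ω → ℝ≥0∞) × (ℝ≥0∞ → Ω → ℝ≥0∞)) : Ω → ℝ :=
  μ[fun ω => U (play ρ τ ω) (play τ ρ ω) ω | m]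

/-- The grid point `n·h ∈ [0,∞]`. -/
def grid (h : ℝ) (n : ℕ) : ℝ≥0∞ := ENNReal.ofReal (n * h)

/-- `⌊t/h⌋ + 1`. -/
def gridIdx (h : ℝ) (t : ℝ≥0∞) : ℕ := ⌊t.toReal / h⌋₊ + 1

/-- `ρ_h(t) := ρ̄((⌊t/h⌋+1)h)` for finite `t`, and `ρ_h(∞) := ∞`. -/
def gridStrat (h : ℝ) (bar : ℕ → Ω → ℝ≥0∞) : ℝ≥0∞ → Ω → ℝ≥0∞ := fun t ω =>
  if t = ∞ then ∞ else bar (gridIdx h t) ω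

/-- Evaluation `φ(σ) : ω ↦ φ(σ(ω), ω)` of a time-indexed family along a random time. -/
def evalAt (φ : ℝ≥0∞ → Ω → ℝ≥0∞) (σ : Ω → ℝ≥0∞) : Ω → ℝ≥0∞ := fun ω => φ (σ ω) ω

/-- `X_t = ess inf_{σ ∈ 𝒯_t} E[U(t,σ) | 𝓕_t]` (pointwise infimum, which coincides with the
essential one since `Ω` is countable and every point is charged). -/
def X1v (μ : Measure Ω) (𝓕 : Filtration ℝ≥0∞ mΩ) (U : ℝ≥0∞ → ℝ≥0∞ → Ω → ℝ)
    (t : ℝ≥0∞) (ω : Ω) : ℝ :=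
  ⨅ σ : STge 𝓕 (fun _ => t), (μ[fun ω' => U t (σ.1 ω') ω' | 𝓕 t]) ω

/-- `Y_t = ess sup_{σ ∈ 𝒯_t} E[U(σ,t) | 𝓕_t]`. -/
def Y1v (μ : Measure Ω) (𝓕 : Filtration ℝ≥0∞ mΩ) (U : ℝ≥0∞ → ℝ≥0∞ → Ω → ℝ)
    (t : ℝ≥0∞) (ω : Ω) : ℝ :=
  ⨆ σ : STge 𝓕 (fun _ => t), (μ[fun ω' => U (σ.1 ω') t ω' | 𝓕 t]) ω

/-- Player 2: `X²_t = ess sup_{σ ∈ 𝒯_t} E[U²(t,σ) | 𝓕_t]`. -/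
def X2v (μ : Measure Ω) (𝓕 : Filtration ℝ≥0∞ mΩ) (U : ℝ≥0∞ → ℝ≥0∞ → Ω → ℝ)
    (t : ℝ≥0∞) (ω : Ω) : ℝ :=
  ⨆ σ : STge 𝓕 (fun _ => t), (μ[fun ω' => U t (σ.1 ω') ω' | 𝓕 t]) ω

/-- Player 2: `Y²_t = ess inf_{σ ∈ 𝒯_t} E[U²(σ,t) | 𝓕_t]`. -/
def Y2v (μ : Measure Ω) (𝓕 : Filtration ℝ≥0∞ mΩ) (U : ℝ≥0∞ → ℝ≥0∞ → Ω → ℝ)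
    (t : ℝ≥0∞) (ω : Ω) : ℝ :=
  ⨅ σ : STge 𝓕 (fun _ => t), (μ[fun ω' => U (σ.1 ω') t ω' | 𝓕 t]) ω

/-- `Z_t = U(t,t)`. -/
def Zv (U : ℝ≥0∞ → ℝ≥0∞ → Ω → ℝ) : ℝ≥0∞ → Ω → ℝ := fun t ω => U t t ω

/-- `X_{ρ₀} 1_{ρ₀ < τ₀} + Y_{τ₀} 1_{ρ₀ > τ₀} + Z_{ρ₀} 1_{ρ₀ = τ₀}`. -/
def dynkinKernel (X Y Z : ℝ≥0∞ → Ω → ℝ) (ρ₀ τ₀ : Ω → ℝ≥0∞) (ω : Ω) : ℝ :=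
  if ρ₀ ω < τ₀ ω then X (ρ₀ ω) ω else if τ₀ ω < ρ₀ ω then Y (τ₀ ω) ω else Z (ρ₀ ω) ω

/-- The Dynkin-game payoff `V(ρ₀,τ₀)`. -/
def dynkinV (μ : Measure Ω) (X Y Z : ℝ≥0∞ → Ω → ℝ) (ρ₀ τ₀ : Ω → ℝ≥0∞) : ℝ :=
  ∫ ω, dynkinKernel X Y Z ρ₀ τ₀ ω ∂μ

/-- The conditional Dynkin-game payoff. -/
def condDynkin (μ : Measure Ω) (m : MeasurableSpace Ω) (X Y Z : ℝ≥0∞ → Ω → ℝ)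
    (ρ₀ τ₀ : Ω → ℝ≥0∞) : Ω → ℝ :=
  μ[fun ω => dynkinKernel X Y Z ρ₀ τ₀ ω | m]

/-- `v_t¹`, the (sup-inf) value of the conditional Dynkin game `G_t¹` with payoffs
`(X¹, Y¹, Z¹)` built from `U¹`. -/
def v1v (μ : Measure Ω) (𝓕 : Filtration ℝ≥0∞ mΩ) (U : ℝ≥0∞ → ℝ≥0∞ → Ω → ℝ)
    (t : ℝ≥0∞) (ω : Ω) : ℝ :=
  ⨆ ρ₀ : STge 𝓕 (fun _ => t), ⨅ τ₀ : STge 𝓕 (fun _ => t),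
    condDynkin μ (𝓕 t) (X1v μ 𝓕 U) (Y1v μ 𝓕 U) (Zv U) ρ₀.1 τ₀.1 ω

/-- `v_t²`, the (inf-sup) value of the conditional Dynkin game `G_t²` with payoffs
`(X², Y², Z²)` built from `U²`. -/
def v2v (μ : Measure Ω) (𝓕 : Filtration ℝ≥0∞ mΩ) (U : ℝ≥0∞ → ℝ≥0∞ → Ω → ℝ)
    (t : ℝ≥0∞) (ω : Ω) : ℝ :=
  ⨅ ρ₀ : STge 𝓕 (fun _ => t), ⨆ τ₀ : STge 𝓕 (fun _ => t),
    condDynkin μ (𝓕 t) (X2v μ 𝓕 U) (Y2v μ 𝓕 U) (Zv U) ρ₀.1 τ₀.1 ω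

/-- `W_t¹ = E[U¹(t, τ_h²(t)) | 𝓕_t]`. -/
def W1v (μ : Measure Ω) (𝓕 : Filtration ℝ≥0∞ mΩ) (U : ℝ≥0∞ → ℝ≥0∞ → Ω → ℝ)
    (h : ℝ) (bar : ℕ → Ω → ℝ≥0∞) (t : ℝ≥0∞) (ω : Ω) : ℝ :=
  (μ[fun ω' => U t (gridStrat h bar t ω') ω' | 𝓕 t]) ω

/-- `W_t² = E[U²(ρ_h¹(t), t) | 𝓕_t]`. -/
def W2v (μ : Measure Ω) (𝓕 : Filtration ℝ≥0∞ mΩ) (U : ℝ≥0∞ → ℝ≥0∞ → Ω → ℝ)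
    (h : ℝ) (bar : ℕ → Ω → ℝ≥0∞) (t : ℝ≥0∞) (ω : Ω) : ℝ :=
  (μ[fun ω' => U (gridStrat h bar t ω') t ω' | 𝓕 t]) ω

/-- `μ₁ = inf {t ≥ 0 : v_t¹ ≤ W_t¹ + ε}`. -/
def mu1T (μ : Measure Ω) (𝓕 : Filtration ℝ≥0∞ mΩ) (U : ℝ≥0∞ → ℝ≥0∞ → Ω → ℝ)
    (h ε : ℝ) (bar : ℕ → Ω → ℝ≥0∞) : Ω → ℝ≥0∞ := fun ω =>
  sInf {t | v1v μ 𝓕 U t ω ≤ W1v μ 𝓕 U h bar t ω + ε}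

/-- `μ₂ = inf {t ≥ 0 : v_t² ≤ W_t² + ε}`. -/
def mu2T (μ : Measure Ω) (𝓕 : Filtration ℝ≥0∞ mΩ) (U : ℝ≥0∞ → ℝ≥0∞ → Ω → ℝ)
    (h ε : ℝ) (bar : ℕ → Ω → ℝ≥0∞) : Ω → ℝ≥0∞ := fun ω =>
  sInf {t | v2v μ 𝓕 U t ω ≤ W2v μ 𝓕 U h bar t ω + ε}

/-- `ρ̄(nh)` is a family of `ε`-optimizers for `Y¹_{nh}`:
`E[U(ρ̄(nh), nh) | 𝓕_{nh}] ≥ Y_{nh} − ε`. -/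
def IsOptRho1 (μ : Measure Ω) (𝓕 : Filtration ℝ≥0∞ mΩ) (U : ℝ≥0∞ → ℝ≥0∞ → Ω → ℝ)
    (ε h : ℝ) (bar : ℕ → Ω → ℝ≥0∞) : Prop :=
  ∀ n : ℕ, bar n ∈ STge 𝓕 (fun _ => grid h n) ∧
    ∀ᵐ ω ∂μ, Y1v μ 𝓕 U (grid h n) ω - ε ≤
      (μ[fun ω' => U (bar n ω') (grid h n) ω' | 𝓕 (grid h n)]) ω

/-- `τ̄(nh)` is a family of `ε`-optimizers for `X¹_{nh}`:
`E[U(nh, τ̄(nh)) | 𝓕_{nh}] ≤ X_{nh} + ε`. -/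
def IsOptTau1 (μ : Measure Ω) (𝓕 : Filtration ℝ≥0∞ mΩ) (U : ℝ≥0∞ → ℝ≥0∞ → Ω → ℝ)
    (ε h : ℝ) (bar : ℕ → Ω → ℝ≥0∞) : Prop :=
  ∀ n : ℕ, bar n ∈ STge 𝓕 (fun _ => grid h n) ∧
    ∀ᵐ ω ∂μ, (μ[fun ω' => U (grid h n) (bar n ω') ω' | 𝓕 (grid h n)]) ω ≤
      X1v μ 𝓕 U (grid h n) ω + ε

/-- `ρ̄²(nh)` is a family of `ε`-optimizers for `Y²_{nh}` (an essential infimum). -/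
def IsOptRho2 (μ : Measure Ω) (𝓕 : Filtration ℝ≥0∞ mΩ) (U : ℝ≥0∞ → ℝ≥0∞ → Ω → ℝ)
    (ε h : ℝ) (bar : ℕ → Ω → ℝ≥0∞) : Prop :=
  ∀ n : ℕ, bar n ∈ STge 𝓕 (fun _ => grid h n) ∧
    ∀ᵐ ω ∂μ, (μ[fun ω' => U (bar n ω') (grid h n) ω' | 𝓕 (grid h n)]) ω ≤
      Y2v μ 𝓕 U (grid h n) ω + ε

/-- `τ̄²(nh)` is a family of `ε`-optimizers for `X²_{nh}` (an essential supremum). -/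
def IsOptTau2 (μ : Measure Ω) (𝓕 : Filtration ℝ≥0∞ mΩ) (U : ℝ≥0∞ → ℝ≥0∞ → Ω → ℝ)
    (ε h : ℝ) (bar : ℕ → Ω → ℝ≥0∞) : Prop :=
  ∀ n : ℕ, bar n ∈ STge 𝓕 (fun _ => grid h n) ∧
    ∀ᵐ ω ∂μ, X2v μ 𝓕 U (grid h n) ω - ε ≤
      (μ[fun ω' => U (grid h n) (bar n ω') ω' | 𝓕 (grid h n)]) ω

/-- The standing assumptions on the filtered probability space: `ℙ` charges every point of the
(countable) `Ω`, the filtration is right continuous (usual conditions; completeness is automatic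
since null sets are empty), and `𝓕 = 𝓕_∞ = ⋃_{t<∞} 𝓕_t`. -/
def UsualSetup (μ : Measure Ω) (𝓕 : Filtration ℝ≥0∞ mΩ) : Prop :=
  (∀ ω : Ω, μ {ω} ≠ 0) ∧
  (∀ t : ℝ≥0∞, (𝓕 t : MeasurableSpace Ω) = ⨅ s ∈ Ioi t, (𝓕 s : MeasurableSpace Ω)) ∧
  ((𝓕 ∞ : MeasurableSpace Ω) = mΩ) ∧
  ((⨆ t ∈ Iio (∞ : ℝ≥0∞), (𝓕 t : MeasurableSpace Ω)) = mΩ)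

/-- The standing assumptions on a payoff `U`: boundedness, `𝓕_{s∨t}`-measurability of `U(s,t)`,
and the uniform-continuity modulus `r` (bounded, nondecreasing, `r(0+) = r(0) = 0`).  Note that
the modulus condition, being imposed on all of `[0,∞]`, encodes that the values at `∞` are the
corresponding limits. -/
def PayoffAssumption (𝓕 : Filtration ℝ≥0∞ mΩ) (U : ℝ≥0∞ → ℝ≥0∞ → Ω → ℝ)
    (r : ℝ≥0∞ → ℝ) : Prop :=
  (∃ M : ℝ, ∀ s t ω, |U s t ω| ≤ M) ∧
  (∀ s t : ℝ≥0∞, Measurable[𝓕 (s ⊔ t)] (U s t)) ∧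
  Monotone r ∧ (∀ x, 0 ≤ r x) ∧ (∃ C : ℝ, ∀ x, r x ≤ C) ∧ r 0 = 0 ∧
  Tendsto r (𝓝[>] (0 : ℝ≥0∞)) (𝓝 (0 : ℝ)) ∧
  (∀ s t s' t' : ℝ≥0∞, ∀ ω, |U s t ω - U s' t' ω| ≤ r (dd s s' + dd t t'))

/-- The values of `U` at `∞` are the limits of the values at finite times. -/
def LimitsAtInfty (U : ℝ≥0∞ → ℝ≥0∞ → Ω → ℝ) : Prop :=
  (∀ s ω, Tendsto (fun b => U s b ω) (𝓝[<] (∞ : ℝ≥0∞)) (𝓝 (U s ∞ ω))) ∧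
  (∀ t ω, Tendsto (fun a => U a t ω) (𝓝[<] (∞ : ℝ≥0∞)) (𝓝 (U ∞ t ω))) ∧
  (∀ ω, Tendsto (fun p : ℝ≥0∞ × ℝ≥0∞ => U p.1 p.2 ω)
    ((𝓝[<] (∞ : ℝ≥0∞)) ×ˢ (𝓝[<] (∞ : ℝ≥0∞))) (𝓝 (U ∞ ∞ ω)))

/-- `ess inf_{σ ∈ 𝒯_v} E[U(s,σ) | 𝓕_v]` for a stopping time `v`. -/
def XatST (μ : Measure Ω) (𝓕 : Filtration ℝ≥0∞ mΩ) (U : ℝ≥0∞ → ℝ≥0∞ → Ω → ℝ)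
    {v : Ω → ℝ≥0∞} (hv : IsStoppingTime 𝓕 (fun ω => (v ω : WithTop ℝ≥0∞))) (s : ℝ≥0∞) (ω : Ω) : ℝ :=
  ⨅ σ : STge 𝓕 v, (μ[fun ω' => U s (σ.1 ω') ω' | hv.measurableSpace]) ω

/-- `X̃_v(s) = ess inf_{σ ∈ 𝒯_v} E[U(s,σ) | 𝓕_v]` for a deterministic time `v`. -/
def Xat (μ : Measure Ω) (𝓕 : Filtration ℝ≥0∞ mΩ) (U : ℝ≥0∞ → ℝ≥0∞ → Ω → ℝ)
    (v s : ℝ≥0∞) (ω : Ω) : ℝ :=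
  ⨅ σ : STge 𝓕 (fun _ => v), (μ[fun ω' => U s (σ.1 ω') ω' | 𝓕 v]) ω

/-- `ρ₀* = μ₁ 1_{μ₁ ≤ μ₂} + ρ²_{μ₂+δ} 1_{μ₁ > μ₂}`. -/
def rhoStar0 (m1 m2 rsad2 : Ω → ℝ≥0∞) : Ω → ℝ≥0∞ := fun ω =>
  if m1 ω ≤ m2 ω then m1 ω else rsad2 ω

/-- `ρ₁*(t) = ρ_h²(t)` if `t ≥ μ₁ ∧ μ₂ + δ` and `μ₁ > μ₂`, else `ρ_h¹(t)`. -/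
def rhoStar1 (m1 m2 : Ω → ℝ≥0∞) (δ : ℝ) (φ1 φ2 : ℝ≥0∞ → Ω → ℝ≥0∞) :
    ℝ≥0∞ → Ω → ℝ≥0∞ := fun t ω =>
  if (m1 ω ⊓ m2 ω) + ENNReal.ofReal δ ≤ t ∧ m2 ω < m1 ω then φ2 t ω else φ1 t ω

/-- `τ₀* = τ¹_{μ₁+δ} 1_{μ₁ ≤ μ₂} + μ₂ 1_{μ₁ > μ₂}`. -/
def tauStar0 (m1 m2 tsad1 : Ω → ℝ≥0∞) : Ω → ℝ≥0∞ := fun ω =>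
  if m1 ω ≤ m2 ω then tsad1 ω else m2 ω

/-- `τ₁*(t) = τ_h¹(t)` if `t ≥ μ₁ ∧ μ₂ + δ` and `μ₁ ≤ μ₂`, else `τ_h²(t)`. -/
def tauStar1 (m1 m2 : Ω → ℝ≥0∞) (δ : ℝ) (ψ1 ψ2 : ℝ≥0∞ → Ω → ℝ≥0∞) :
    ℝ≥0∞ → Ω → ℝ≥0∞ := fun t ω =>
  if (m1 ω ⊓ m2 ω) + ENNReal.ofReal δ ≤ t ∧ m1 ω ≤ m2 ω then ψ1 t ω else ψ2 t ω

end StoppingGames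

/-!
Since `Ω` is countable and `ℙ` charges every point, every almost-sure statement below holds
pointwise. Conditioned on `𝓕_{ρ₀ ∧ τ₀}`, the payoff `U(ρ[τ], τ[ρ])` of two strategies is the
Dynkin kernel with `E[U(t, τ₁(t)) | 𝓕_t]`, `E[U(ρ₁(t), t) | 𝓕_t]` and `U(t, t)` in place of
`X_t`, `Y_t`, `Z_t`. As `X` and `Y` are the infimum and supremum of such responses and `τ_h`,
`ρ_h` are `2ε`-optimal ones, any `ρ` playing against `(τ_σ^ε, τ_h)` gets at most the Dynkin
payoff `V(ρ₀, τ_σ^ε) + 2ε`, while `(ρ_σ^ε, ρ_h)` gets at least `V(ρ_σ^ε, τ₀) - 2ε` against any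
`τ`. The `ε`-saddle point inequalities connect these bounds, for a total of `2ε + ε + 2ε = 5ε`.
-/

namespace MeasureTheory

section Discrete

variable {Ω β ι : Type*} [MeasurableSpace Ω] [MeasurableSpace β]

theorem forall_mem_of_ae_restrict {μ : Measure Ω} (hμ : ∀ ω, μ {ω} ≠ 0) {s : Set Ω}
    {p : Ω → Prop} (h : ∀ᵐ ω ∂μ.restrict s, p ω) : ∀ ω ∈ s, p ω := by
  intro ω hω
  by_contra hp
  have hnull : μ.restrict s {ω' | ¬p ω'} = 0 := ae_iff.1 h
  refine hμ ω (nonpos_iff_eq_zero.1 ?_)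
  calc μ {ω} = μ ({ω} ∩ s) := by rw [singleton_inter_of_mem hω]
    _ ≤ μ.restrict s {ω} := Measure.le_restrict_apply s {ω}
    _ = 0 := measure_mono_null (singleton_subset_iff.2 hp) hnull

theorem forall_of_ae {μ : Measure Ω} (hμ : ∀ ω, μ {ω} ≠ 0) {p : Ω → Prop}
    (h : ∀ᵐ ω ∂μ, p ω) (ω : Ω) : p ω :=
  forall_mem_of_ae_restrict hμ (s := univ) (by rwa [Measure.restrict_univ]) ω trivial

theorem measurable_of_forall_mem_measurableAtom [Countable Ω] {f : Ω → β}
    (h : ∀ x, ∀ y ∈ measurableAtom x, f y = f x) : Measurable f := by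
  intro S _
  have : f ⁻¹' S = ⋃ x ∈ f ⁻¹' S, measurableAtom x := by
    refine Subset.antisymm (fun x hx => mem_biUnion hx (mem_measurableAtom_self x)) ?_
    simp only [iUnion_subset_iff]
    intro x hx y hy
    simpa [mem_preimage, h x y hy] using hx
  rw [this]
  exact .biUnion (to_countable _) fun x _ => .measurableAtom_of_countable x

theorem _root_.Measurable.eq_of_mem_measurableAtom [MeasurableSingletonClass β] {f : Ω → β}
    (hf : Measurable f) {x y : Ω} (hy : y ∈ measurableAtom x) : f y = f x :=
  mem_of_mem_measurableAtom hy (hf (measurableSet_singleton (f x))) rfl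

theorem measurable_apply_of_countable [Countable Ω] {α : Type*} [MeasurableSpace α]
    [MeasurableSingletonClass α] [MeasurableSingletonClass β] {F : α → Ω → β}
    (hF : ∀ a, Measurable (F a)) {f : Ω → α} (hf : Measurable f) :
    Measurable fun ω => F (f ω) ω :=
  measurable_of_forall_mem_measurableAtom fun x y hy => by
    rw [hf.eq_of_mem_measurableAtom hy, (hF _).eq_of_mem_measurableAtom hy]

theorem measurable_iInf_of_countable [Countable Ω] [InfSet β] [MeasurableSingletonClass β]
    {f : ι → Ω → β} (hf : ∀ i, Measurable (f i)) : Measurable fun ω => ⨅ i, f i ω :=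
  measurable_of_forall_mem_measurableAtom fun _ _ hy =>
    iInf_congr fun i => (hf i).eq_of_mem_measurableAtom hy

theorem measurable_iSup_of_countable [Countable Ω] [SupSet β] [MeasurableSingletonClass β]
    {f : ι → Ω → β} (hf : ∀ i, Measurable (f i)) : Measurable fun ω => ⨆ i, f i ω :=
  measurable_of_forall_mem_measurableAtom fun _ _ hy =>
    iSup_congr fun i => (hf i).eq_of_mem_measurableAtom hy

end Discrete

section CondExp

variable {Ω : Type*} {m m₀ : MeasurableSpace Ω} {μ : Measure Ω} {f g : Ω → ℝ}

theorem condExp_apply_le_add [IsFiniteMeasure μ] (hμ : ∀ ω, μ {ω} ≠ 0) (hm : m ≤ m₀)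
    (hf : Integrable f μ) (hg : Integrable g μ) {c : ℝ} (hfg : ∀ ω, f ω ≤ g ω + c) (ω : Ω) :
    μ[f|m] ω ≤ μ[g|m] ω + c := by
  have hmono : μ[f|m] ≤ᵐ[μ] μ[fun ω => g ω + c|m] :=
    condExp_mono hf (hg.add (integrable_const c)) (ae_of_all μ hfg)
  have hadd : μ[fun ω => g ω + c|m] =ᵐ[μ] μ[g|m] + μ[fun _ => c|m] :=
    condExp_add hg (integrable_const c) m
  rw [condExp_const hm] at hadd
  simpa [forall_of_ae hμ hadd ω] using forall_of_ae hμ hmono ω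

theorem abs_condExp_apply_le [IsFiniteMeasure μ] (hμ : ∀ ω, μ {ω} ≠ 0) (hm : m ≤ m₀)
    (hf : Integrable f μ) {M : ℝ} (hM : ∀ ω, |f ω| ≤ M) (ω : Ω) : |μ[f|m] ω| ≤ M := by
  have hup := condExp_apply_le_add hμ hm hf (integrable_zero Ω ℝ μ) (c := M)
    (fun ω => by rw [Pi.zero_apply, zero_add]; exact (abs_le.1 (hM ω)).2) ω
  have hlow := condExp_apply_le_add hμ hm (integrable_zero Ω ℝ μ) hf (c := M)
    (fun ω => by rw [Pi.zero_apply]; linarith [(abs_le.1 (hM ω)).1]) ω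
  rw [condExp_zero, Pi.zero_apply] at hup hlow
  exact abs_le.2 ⟨by linarith, by linarith⟩

theorem condExp_apply_eq_of_eqOn (hμ : ∀ ω, μ {ω} ≠ 0) (hm : m ≤ m₀) {s : Set Ω}
    (hs : MeasurableSet[m] s) (hf : Integrable f μ) (hg : Integrable g μ) (hfg : EqOn f g s) :
    ∀ ω ∈ s, μ[f|m] ω = μ[g|m] ω := by
  have hzero : μ[f - g|m] =ᵐ[μ.restrict s] 0 :=
    condExp_ae_eq_restrict_zero hs
      (ae_restrict_of_forall_mem (hm s hs) fun ω hω => sub_eq_zero.2 (hfg hω))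
  have hsub := ae_restrict_of_ae (s := s) (condExp_sub hf hg m)
  refine forall_mem_of_ae_restrict hμ ?_
  filter_upwards [hzero, hsub] with ω h0 h1
  simpa [h0, sub_eq_zero] using h1.symm

end CondExp

section StoppingTime

variable {Ω ι : Type*} {m₀ : MeasurableSpace Ω} {μ : Measure Ω} {f g : Ω → ℝ}
  [LinearOrder ι] [TopologicalSpace ι] [OrderTopology ι] [SecondCountableTopology ι]
  {𝓕 : Filtration ι m₀} {τ π : Ω → WithTop ι}

theorem condExp_min_stopping_time_apply_eq [IsFiniteMeasure μ] (hμ : ∀ ω, μ {ω} ≠ 0)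
    (hτ : IsStoppingTime 𝓕 τ) (hπ : IsStoppingTime 𝓕 π) {s : Set Ω}
    (hs : MeasurableSet[hτ.measurableSpace] s) (hsle : ∀ ω ∈ s, τ ω ≤ π ω)
    (hf : Integrable f μ) (hg : Integrable g μ) {t : ι}
    (hfg : ∀ ω ∈ s, τ ω = t → f ω = g ω) {ω : Ω} (hω : ω ∈ s) (hωt : τ ω = t) :
    μ[f|(hτ.min hπ).measurableSpace] ω = μ[g|𝓕 t] ω := by
  have hst : MeasurableSet[𝓕 t] (s ∩ {ω | τ ω = t}) :=
    (hτ.measurableSet_inter_eq_iff s t).1 (hs.inter (hτ.measurableSet_eq' t))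
  calc μ[f|(hτ.min hπ).measurableSpace] ω = μ[f|hτ.measurableSpace] ω :=
        forall_mem_of_ae_restrict hμ (condExp_min_stopping_time_ae_eq_restrict_le hτ hπ) ω
          (hsle ω hω)
    _ = μ[f|𝓕 t] ω :=
        forall_mem_of_ae_restrict hμ (condExp_stopping_time_ae_eq_restrict_eq hτ t) ω hωt
    _ = μ[g|𝓕 t] ω :=
        condExp_apply_eq_of_eqOn hμ (𝓕.le t) hst hf hg (fun x hx => hfg x hx.1 hx.2) ω
          ⟨hω, hωt⟩

end StoppingTime

end MeasureTheory

namespace StoppingGames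

variable {Ω : Type*}

theorem dynkinKernel_le_add {X Y Z X' Y' Z' : ℝ≥0∞ → Ω → ℝ} {c : ℝ}
    (hX : ∀ t ≠ ∞, ∀ ω, X t ω ≤ X' t ω + c) (hY : ∀ t ≠ ∞, ∀ ω, Y t ω ≤ Y' t ω + c)
    (hZ : ∀ t ω, Z t ω ≤ Z' t ω + c) (a b : Ω → ℝ≥0∞) (ω : Ω) :
    dynkinKernel X Y Z a b ω ≤ dynkinKernel X' Y' Z' a b ω + c := by
  unfold dynkinKernel
  split_ifs with h₁ h₂
  exacts [hX _ h₁.ne_top ω, hY _ h₂.ne_top ω, hZ _ ω]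

variable [mΩ : MeasurableSpace Ω] {𝓕 : Filtration ℝ≥0∞ mΩ}

theorem measurable_of_isStoppingTime {τ : Ω → ℝ≥0∞}
    (hτ : IsStoppingTime 𝓕 (fun ω => (τ ω : WithTop ℝ≥0∞))) : Measurable τ :=
  measurable_of_Iic fun t => by
    simpa only [WithTop.coe_le_coe, preimage, mem_Iic] using 𝓕.le t _ (hτ.measurableSet_le t)

theorem IsStrategy.measurable_play {ρ τ : (Ω → ℝ≥0∞) × (ℝ≥0∞ → Ω → ℝ≥0∞)}
    (hρ : IsStrategy 𝓕 ρ) (hτ : Measurable τ.1) : Measurable (play ρ τ) :=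
  have hρ₀ := measurable_of_isStoppingTime hρ.1
  Measurable.ite (measurableSet_le hρ₀ hτ) hρ₀ (hρ.2.1.comp (hτ.prodMk measurable_id))

theorem integrable_payoff_comp [Countable Ω] {μ : Measure Ω} [IsFiniteMeasure μ]
    {U : ℝ≥0∞ → ℝ≥0∞ → Ω → ℝ} (hU : ∀ s t, Measurable (U s t)) {M : ℝ}
    (hM : ∀ s t ω, |U s t ω| ≤ M) {a b : Ω → ℝ≥0∞} (ha : Measurable a) (hb : Measurable b) :
    Integrable (fun ω => U (a ω) (b ω) ω) μ :=
  .of_bound (measurable_apply_of_countable (F := fun p : ℝ≥0∞ × ℝ≥0∞ => U p.1 p.2)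
    (fun p => hU p.1 p.2) (ha.prodMk hb)).aestronglyMeasurable M
    (ae_of_all _ fun _ => hM _ _ _)

/-- The payoff when player 1 stops first, at `t`, and player 2 answers with `φ`. -/
def responseX (μ : Measure Ω) (𝓕 : Filtration ℝ≥0∞ mΩ) (U : ℝ≥0∞ → ℝ≥0∞ → Ω → ℝ)
    (φ : ℝ≥0∞ → Ω → ℝ≥0∞) (t : ℝ≥0∞) : Ω → ℝ :=
  μ[fun ω => U t (φ t ω) ω|𝓕 t]

/-- The payoff when player 2 stops first, at `t`, and player 1 answers with `φ`. -/
def responseY (μ : Measure Ω) (𝓕 : Filtration ℝ≥0∞ mΩ) (U : ℝ≥0∞ → ℝ≥0∞ → Ω → ℝ)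
    (φ : ℝ≥0∞ → Ω → ℝ≥0∞) (t : ℝ≥0∞) : Ω → ℝ :=
  μ[fun ω => U (φ t ω) t ω|𝓕 t]

section Payoff

variable [Countable Ω] {μ : Measure Ω} [IsFiniteMeasure μ] {U : ℝ≥0∞ → ℝ≥0∞ → Ω → ℝ} {M : ℝ}
  {ρ τ : (Ω → ℝ≥0∞) × (ℝ≥0∞ → Ω → ℝ≥0∞)}

theorem condExp_payoff_min_apply_of_lt (hμ : ∀ ω, μ {ω} ≠ 0)
    (hU : ∀ s t, Measurable (U s t)) (hM : ∀ s t ω, |U s t ω| ≤ M)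
    (hρ : IsStrategy 𝓕 ρ) (hτ : IsStrategy 𝓕 τ) {ω : Ω} (hlt : ρ.1 ω < τ.1 ω) :
    μ[fun ω => U (play ρ τ ω) (play τ ρ ω) ω|(hρ.1.min hτ.1).measurableSpace] ω =
      responseX μ 𝓕 U τ.2 (ρ.1 ω) ω := by
  have hρ₀ := measurable_of_isStoppingTime hρ.1
  have hτ₀ := measurable_of_isStoppingTime hτ.1
  have hs : MeasurableSet[hρ.1.measurableSpace] {x | ρ.1 x < τ.1 x} := by
    simpa only [compl_ofPred, WithTop.coe_le_coe, not_le] using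
      (hτ.1.measurableSet_stopping_time_le hρ.1).compl
  refine condExp_min_stopping_time_apply_eq hμ hρ.1 hτ.1 hs
    (fun x hx => WithTop.coe_le_coe.2 (le_of_lt hx))
    (integrable_payoff_comp hU hM (hρ.measurable_play hτ₀) (hτ.measurable_play hρ₀))
    (integrable_payoff_comp hU hM measurable_const
      (measurable_of_isStoppingTime (hτ.2.2 _ hlt.ne_top).1)) ?_ hlt rfl
  intro x (hx : ρ.1 x < τ.1 x) hxω
  simp only [play, if_pos hx.le, if_neg (not_le.2 hx)]
  rw [WithTop.coe_inj.1 hxω]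

theorem condExp_payoff_min_apply_of_eq (hμ : ∀ ω, μ {ω} ≠ 0)
    (hUm : ∀ s t, Measurable[𝓕 (s ⊔ t)] (U s t)) (hM : ∀ s t ω, |U s t ω| ≤ M)
    (hρ : IsStrategy 𝓕 ρ) (hτ : IsStrategy 𝓕 τ) {ω : Ω} (heq : ρ.1 ω = τ.1 ω) :
    μ[fun ω => U (play ρ τ ω) (play τ ρ ω) ω|(hρ.1.min hτ.1).measurableSpace] ω =
      Zv U (ρ.1 ω) ω := by
  have hU : ∀ s t, Measurable (U s t) := fun s t => (hUm s t).mono (𝓕.le _) le_rfl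
  have hρ₀ := measurable_of_isStoppingTime hρ.1
  have hτ₀ := measurable_of_isStoppingTime hτ.1
  have hs : MeasurableSet[hρ.1.measurableSpace] {x | ρ.1 x = τ.1 x} := by
    simpa only [WithTop.coe_inj] using hρ.1.measurableSet_eq_stopping_time hτ.1
  have hZ : StronglyMeasurable[𝓕 (ρ.1 ω)] (U (ρ.1 ω) (ρ.1 ω)) := by
    have h := hUm (ρ.1 ω) (ρ.1 ω)
    rw [max_self] at h
    exact h.stronglyMeasurable
  have hZi : Integrable (U (ρ.1 ω) (ρ.1 ω)) μ :=
    integrable_payoff_comp hU hM (a := fun _ => ρ.1 ω) (b := fun _ => ρ.1 ω)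
      measurable_const measurable_const
  rw [Zv, ← condExp_of_stronglyMeasurable (𝓕.le _) hZ hZi]
  refine condExp_min_stopping_time_apply_eq hμ hρ.1 hτ.1 hs (fun x hx => WithTop.coe_le_coe.2 hx.le)
    (integrable_payoff_comp hU hM (hρ.measurable_play hτ₀) (hτ.measurable_play hρ₀)) hZi
    ?_ heq rfl
  intro x (hx : ρ.1 x = τ.1 x) hxω
  simp only [play, if_pos hx.le, if_pos hx.ge]
  rw [← hx, WithTop.coe_inj.1 hxω]

theorem condExp_payoff_min_eq (hμ : ∀ ω, μ {ω} ≠ 0)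
    (hUm : ∀ s t, Measurable[𝓕 (s ⊔ t)] (U s t)) (hM : ∀ s t ω, |U s t ω| ≤ M)
    (hρ : IsStrategy 𝓕 ρ) (hτ : IsStrategy 𝓕 τ) :
    μ[fun ω => U (play ρ τ ω) (play τ ρ ω) ω|(hρ.1.min hτ.1).measurableSpace] =
      dynkinKernel (responseX μ 𝓕 U τ.2) (responseY μ 𝓕 U ρ.2) (Zv U) ρ.1 τ.1 := by
  have hU : ∀ s t, Measurable (U s t) := fun s t => (hUm s t).mono (𝓕.le _) le_rfl
  funext ω
  unfold dynkinKernel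
  split_ifs with hlt hgt
  · exact condExp_payoff_min_apply_of_lt hμ hU hM hρ hτ hlt
  · -- player 2 stops first: this is the previous case with the roles of the players exchanged
    have hmin : (hρ.1.min hτ.1).measurableSpace = (hτ.1.min hρ.1).measurableSpace := by
      rw [hρ.1.measurableSpace_min hτ.1, hτ.1.measurableSpace_min hρ.1, inf_comm]
    rw [hmin]
    exact condExp_payoff_min_apply_of_lt (U := fun s t => U t s) hμ (fun s t => hU t s)
      (fun s t => hM t s) hτ hρ hgt
  · exact condExp_payoff_min_apply_of_eq hμ hUm hM hρ hτ
      (le_antisymm (not_lt.1 hgt) (not_lt.1 hlt))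

end Payoff

theorem integrable_dynkinKernel [Countable Ω] {μ : Measure Ω} [IsFiniteMeasure μ]
    {X Y Z : ℝ≥0∞ → Ω → ℝ} (hX : ∀ t, Measurable (X t)) (hY : ∀ t, Measurable (Y t))
    (hZ : ∀ t, Measurable (Z t)) {M : ℝ} (hXM : ∀ t ω, |X t ω| ≤ M)
    (hYM : ∀ t ω, |Y t ω| ≤ M) (hZM : ∀ t ω, |Z t ω| ≤ M) {a b : Ω → ℝ≥0∞}
    (ha : Measurable a) (hb : Measurable b) : Integrable (dynkinKernel X Y Z a b) μ := by
  refine .of_bound (Measurable.aestronglyMeasurable ?_) M (ae_of_all _ fun ω => ?_)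
  · exact .ite (measurableSet_lt ha hb) (measurable_apply_of_countable hX ha)
      (.ite (measurableSet_lt hb ha) (measurable_apply_of_countable hY hb)
        (measurable_apply_of_countable hZ ha))
  · unfold dynkinKernel
    split_ifs
    exacts [hXM _ ω, hYM _ ω, hZM _ ω]

theorem mem_STge_of_mem_STgt {t : ℝ≥0∞} {τ : Ω → ℝ≥0∞} (hτ : τ ∈ STgt 𝓕 t) :
    τ ∈ STge 𝓕 (fun _ => t) :=
  ⟨hτ.1, fun ω => (hτ.2 ω).le⟩

theorem const_top_mem_STge (σ : Ω → ℝ≥0∞) : (fun _ => ∞) ∈ STge 𝓕 σ :=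
  ⟨isStoppingTime_const 𝓕 ∞, fun _ => le_top⟩

section Values

variable [Countable Ω] {μ : Measure Ω} [IsFiniteMeasure μ] {U : ℝ≥0∞ → ℝ≥0∞ → Ω → ℝ} {M : ℝ}
  {t : ℝ≥0∞}

theorem abs_condExp_payoff_le (hμ : ∀ ω, μ {ω} ≠ 0) (hU : ∀ s t, Measurable (U s t))
    (hM : ∀ s t ω, |U s t ω| ≤ M) {a b : Ω → ℝ≥0∞} (ha : Measurable a) (hb : Measurable b)
    (t : ℝ≥0∞) (ω : Ω) : |μ[fun ω => U (a ω) (b ω) ω|𝓕 t] ω| ≤ M :=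
  abs_condExp_apply_le hμ (𝓕.le t) (integrable_payoff_comp hU hM ha hb) (fun _ => hM _ _ _) ω

theorem X1v_le_condExp (hμ : ∀ ω, μ {ω} ≠ 0) (hU : ∀ s t, Measurable (U s t))
    (hM : ∀ s t ω, |U s t ω| ≤ M) {σ : Ω → ℝ≥0∞} (hσ : σ ∈ STge 𝓕 (fun _ => t)) (ω : Ω) :
    X1v μ 𝓕 U t ω ≤ μ[fun ω => U t (σ ω) ω|𝓕 t] ω := by
  have hbdd : BddBelow (range fun σ' : STge 𝓕 (fun _ => t) =>
      μ[fun ω => U t (σ'.1 ω) ω|𝓕 t] ω) := by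
    refine ⟨-M, ?_⟩
    rintro _ ⟨σ', rfl⟩
    exact (abs_le.1 (abs_condExp_payoff_le hμ hU hM measurable_const
      (measurable_of_isStoppingTime σ'.2.1) t ω)).1
  exact ciInf_le hbdd ⟨σ, hσ⟩

theorem condExp_le_Y1v (hμ : ∀ ω, μ {ω} ≠ 0) (hU : ∀ s t, Measurable (U s t))
    (hM : ∀ s t ω, |U s t ω| ≤ M) {σ : Ω → ℝ≥0∞} (hσ : σ ∈ STge 𝓕 (fun _ => t)) (ω : Ω) :
    μ[fun ω => U (σ ω) t ω|𝓕 t] ω ≤ Y1v μ 𝓕 U t ω := by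
  have hbdd : BddAbove (range fun σ' : STge 𝓕 (fun _ => t) =>
      μ[fun ω => U (σ'.1 ω) t ω|𝓕 t] ω) := by
    refine ⟨M, ?_⟩
    rintro _ ⟨σ', rfl⟩
    exact (abs_le.1 (abs_condExp_payoff_le hμ hU hM (measurable_of_isStoppingTime σ'.2.1)
      measurable_const t ω)).2
  exact le_ciSup hbdd ⟨σ, hσ⟩

theorem abs_X1v_le (hμ : ∀ ω, μ {ω} ≠ 0) (hU : ∀ s t, Measurable (U s t))
    (hM : ∀ s t ω, |U s t ω| ≤ M) (t : ℝ≥0∞) (ω : Ω) : |X1v μ 𝓕 U t ω| ≤ M := by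
  have hbound (σ : STge 𝓕 (fun _ => t)) :=
    abs_le.1 (abs_condExp_payoff_le (μ := μ) (𝓕 := 𝓕) hμ hU hM (a := fun _ => t)
      measurable_const (measurable_of_isStoppingTime σ.2.1) t ω)
  have : Nonempty (STge 𝓕 (fun _ => t)) := ⟨⟨_, const_top_mem_STge _⟩⟩
  exact abs_le.2 ⟨le_ciInf fun σ => (hbound σ).1,
    (X1v_le_condExp hμ hU hM (const_top_mem_STge _) ω).trans
      (hbound ⟨_, const_top_mem_STge _⟩).2⟩

theorem abs_Y1v_le (hμ : ∀ ω, μ {ω} ≠ 0) (hU : ∀ s t, Measurable (U s t))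
    (hM : ∀ s t ω, |U s t ω| ≤ M) (t : ℝ≥0∞) (ω : Ω) : |Y1v μ 𝓕 U t ω| ≤ M := by
  have hbound (σ : STge 𝓕 (fun _ => t)) :=
    abs_le.1 (abs_condExp_payoff_le (μ := μ) (𝓕 := 𝓕) hμ hU hM
      (measurable_of_isStoppingTime σ.2.1) (b := fun _ => t) measurable_const t ω)
  have : Nonempty (STge 𝓕 (fun _ => t)) := ⟨⟨_, const_top_mem_STge _⟩⟩
  exact abs_le.2 ⟨(hbound ⟨_, const_top_mem_STge _⟩).1.trans
    (condExp_le_Y1v hμ hU hM (const_top_mem_STge _) ω), ciSup_le fun σ => (hbound σ).2⟩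

omit [IsFiniteMeasure μ] in
theorem measurable_X1v (t : ℝ≥0∞) : Measurable (X1v μ 𝓕 U t) :=
  measurable_iInf_of_countable fun _ => stronglyMeasurable_condExp.measurable.mono (𝓕.le t) le_rfl

omit [IsFiniteMeasure μ] in
theorem measurable_Y1v (t : ℝ≥0∞) : Measurable (Y1v μ 𝓕 U t) :=
  measurable_iSup_of_countable fun _ => stronglyMeasurable_condExp.measurable.mono (𝓕.le t) le_rfl

end Values

section Comparison

variable [Countable Ω] {μ : Measure Ω} [IsFiniteMeasure μ] {U : ℝ≥0∞ → ℝ≥0∞ → Ω → ℝ} {M : ℝ}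
  {σ : Ω → ℝ≥0∞} {ρ τ : (Ω → ℝ≥0∞) × (ℝ≥0∞ → Ω → ℝ≥0∞)}

theorem integrable_dynkinKernel_values (hμ : ∀ ω, μ {ω} ≠ 0)
    (hUm : ∀ s t, Measurable[𝓕 (s ⊔ t)] (U s t)) (hM : ∀ s t ω, |U s t ω| ≤ M)
    {a b : Ω → ℝ≥0∞} (ha : Measurable a) (hb : Measurable b) :
    Integrable (dynkinKernel (X1v μ 𝓕 U) (Y1v μ 𝓕 U) (Zv U) a b) μ :=
  have hU : ∀ s t, Measurable (U s t) := fun s t => (hUm s t).mono (𝓕.le _) le_rfl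
  integrable_dynkinKernel measurable_X1v measurable_Y1v (fun t => hU t t)
    (abs_X1v_le hμ hU hM) (abs_Y1v_le hμ hU hM) (fun t => hM t t) ha hb

theorem condPayoff_eq_condExp_dynkinKernel (hμ : ∀ ω, μ {ω} ≠ 0)
    (hUm : ∀ s t, Measurable[𝓕 (s ⊔ t)] (U s t)) (hM : ∀ s t ω, |U s t ω| ≤ M)
    (hσ : IsStoppingTime 𝓕 (fun ω => (σ ω : WithTop ℝ≥0∞)))
    (hρ : IsStrategyGe 𝓕 σ ρ) (hτ : IsStrategyGe 𝓕 σ τ) (ω : Ω) :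
    condPayoff μ hσ.measurableSpace U ρ τ ω =
      μ[dynkinKernel (responseX μ 𝓕 U τ.2) (responseY μ 𝓕 U ρ.2) (Zv U) ρ.1 τ.1|
        hσ.measurableSpace] ω := by
  have hle : hσ.measurableSpace ≤ (hρ.1.1.min hτ.1.1).measurableSpace :=
    hσ.measurableSpace_mono _ fun ω =>
      le_min (WithTop.coe_le_coe.2 (hρ.2 ω)) (WithTop.coe_le_coe.2 (hτ.2 ω))
  rw [condPayoff, ← condExp_payoff_min_eq hμ hUm hM hρ.1 hτ.1]
  exact (forall_of_ae hμ (condExp_condExp_of_le hle (IsStoppingTime.measurableSpace_le _)) ω).symm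

theorem condPayoff_le_condDynkin_add (hμ : ∀ ω, μ {ω} ≠ 0)
    (hUm : ∀ s t, Measurable[𝓕 (s ⊔ t)] (U s t)) (hM : ∀ s t ω, |U s t ω| ≤ M)
    (hσ : IsStoppingTime 𝓕 (fun ω => (σ ω : WithTop ℝ≥0∞)))
    (hρ : IsStrategyGe 𝓕 σ ρ) (hτ : IsStrategyGe 𝓕 σ τ) {c : ℝ} (hc : 0 ≤ c)
    (hX : ∀ t ≠ ∞, ∀ ω, responseX μ 𝓕 U τ.2 t ω ≤ X1v μ 𝓕 U t ω + c) (ω : Ω) :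
    condPayoff μ hσ.measurableSpace U ρ τ ω ≤
      condDynkin μ hσ.measurableSpace (X1v μ 𝓕 U) (Y1v μ 𝓕 U) (Zv U) ρ.1 τ.1 ω + c := by
  have hU : ∀ s t, Measurable (U s t) := fun s t => (hUm s t).mono (𝓕.le _) le_rfl
  have hY (t : ℝ≥0∞) (ht : t ≠ ∞) (ω : Ω) :
      responseY μ 𝓕 U ρ.2 t ω ≤ Y1v μ 𝓕 U t ω + c :=
    (condExp_le_Y1v hμ hU hM (mem_STge_of_mem_STgt (hρ.1.2.2 t ht)) ω).trans
      (le_add_of_nonneg_right hc)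
  rw [condPayoff_eq_condExp_dynkinKernel hμ hUm hM hσ hρ hτ]
  refine condExp_apply_le_add hμ hσ.measurableSpace_le ?_
    (integrable_dynkinKernel_values hμ hUm hM (measurable_of_isStoppingTime hρ.1.1)
      (measurable_of_isStoppingTime hτ.1.1))
    (dynkinKernel_le_add hX hY (fun _ _ => le_add_of_nonneg_right hc) _ _) ω
  rw [← condExp_payoff_min_eq hμ hUm hM hρ.1 hτ.1]
  exact integrable_condExp

theorem condDynkin_le_condPayoff_add (hμ : ∀ ω, μ {ω} ≠ 0)
    (hUm : ∀ s t, Measurable[𝓕 (s ⊔ t)] (U s t)) (hM : ∀ s t ω, |U s t ω| ≤ M)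
    (hσ : IsStoppingTime 𝓕 (fun ω => (σ ω : WithTop ℝ≥0∞)))
    (hρ : IsStrategyGe 𝓕 σ ρ) (hτ : IsStrategyGe 𝓕 σ τ) {c : ℝ} (hc : 0 ≤ c)
    (hY : ∀ t ≠ ∞, ∀ ω, Y1v μ 𝓕 U t ω ≤ responseY μ 𝓕 U ρ.2 t ω + c) (ω : Ω) :
    condDynkin μ hσ.measurableSpace (X1v μ 𝓕 U) (Y1v μ 𝓕 U) (Zv U) ρ.1 τ.1 ω ≤
      condPayoff μ hσ.measurableSpace U ρ τ ω + c := by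
  have hU : ∀ s t, Measurable (U s t) := fun s t => (hUm s t).mono (𝓕.le _) le_rfl
  have hX (t : ℝ≥0∞) (ht : t ≠ ∞) (ω : Ω) :
      X1v μ 𝓕 U t ω ≤ responseX μ 𝓕 U τ.2 t ω + c :=
    (X1v_le_condExp hμ hU hM (mem_STge_of_mem_STgt (hτ.1.2.2 t ht)) ω).trans
      (le_add_of_nonneg_right hc)
  rw [condPayoff_eq_condExp_dynkinKernel hμ hUm hM hσ hρ hτ]
  refine condExp_apply_le_add hμ hσ.measurableSpace_le
    (integrable_dynkinKernel_values hμ hUm hM (measurable_of_isStoppingTime hρ.1.1)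
      (measurable_of_isStoppingTime hτ.1.1)) ?_
    (dynkinKernel_le_add hX hY (fun _ _ => le_add_of_nonneg_right hc) _ _) ω
  rw [← condExp_payoff_min_eq hμ hUm hM hρ.1 hτ.1]
  exact integrable_condExp

omit [Countable Ω] [IsFiniteMeasure μ] in
theorem condPayoff_neg (hμ : ∀ ω, μ {ω} ≠ 0)
    (hσ : IsStoppingTime 𝓕 (fun ω => (σ ω : WithTop ℝ≥0∞))) (ω : Ω) :
    condPayoff μ hσ.measurableSpace (fun s t ω => -U s t ω) ρ τ ω =
      -condPayoff μ hσ.measurableSpace U ρ τ ω :=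
  forall_of_ae hμ (condExp_neg (fun ω => U (play ρ τ ω) (play τ ρ ω) ω) _) ω

end Comparison

theorem lt_grid_gridIdx {h : ℝ} (hh : 0 < h) {t : ℝ≥0∞} (ht : t ≠ ∞) :
    t < grid h (gridIdx h t) := by
  have hlt : t.toReal < ((⌊t.toReal / h⌋₊ + 1 : ℕ) : ℝ) * h := by
    push_cast
    exact (div_lt_iff₀ hh).1 (Nat.lt_floor_add_one _)
  calc t = ENNReal.ofReal t.toReal := (ENNReal.ofReal_toReal ht).symm
    _ < grid h (gridIdx h t) :=
      (ENNReal.ofReal_lt_ofReal_iff (mul_pos (Nat.cast_pos.2 (Nat.succ_pos _)) hh)).2 hlt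

omit mΩ in
theorem gridStrat_of_ne_top {h : ℝ} {bar : ℕ → Ω → ℝ≥0∞} {t : ℝ≥0∞} (ht : t ≠ ∞) :
    gridStrat h bar t = bar (gridIdx h t) :=
  funext fun _ => if_neg ht

theorem measurable_uncurry_gridStrat {h : ℝ} {bar : ℕ → Ω → ℝ≥0∞}
    (hbar : ∀ n, Measurable (bar n)) : Measurable (Function.uncurry (gridStrat h bar)) := by
  have hidx : Measurable (gridIdx h) :=
    (measurable_from_nat (f := (· + 1))).comp
      (Nat.measurable_floor.comp (ENNReal.measurable_toReal.div_const h))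
  have hbar' : Measurable fun p : Ω × ℕ => bar p.2 p.1 :=
    measurable_from_prod_countable_left hbar
  exact Measurable.ite (measurable_fst (measurableSet_singleton ∞)) measurable_const
    (hbar'.comp (measurable_snd.prodMk (hidx.comp measurable_fst)))

theorem isStrategyGe_gridStrat {h : ℝ} (hh : 0 < h) {bar : ℕ → Ω → ℝ≥0∞}
    (hbar : ∀ n, bar n ∈ STge 𝓕 (fun _ => grid h n)) {σ ρ₀ : Ω → ℝ≥0∞}
    (hρ₀ : ρ₀ ∈ STge 𝓕 σ) : IsStrategyGe 𝓕 σ (ρ₀, gridStrat h bar) := by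
  refine ⟨⟨hρ₀.1, measurable_uncurry_gridStrat fun n => measurable_of_isStoppingTime (hbar n).1,
    fun t ht => ?_⟩, hρ₀.2⟩
  show gridStrat h bar t ∈ STgt 𝓕 t
  rw [gridStrat_of_ne_top ht]
  exact ⟨(hbar _).1, fun ω => (lt_grid_gridIdx hh ht).trans_le ((hbar _).2 ω)⟩

/-- Remark 3.4: in the zero-sum case, for a fixed stopping time `σ`, an
`ε`-saddle point `(ρ_σ^ε, τ_σ^ε)` of the conditional Dynkin game at `σ`, completed by the grid
strategies, yields a `5ε`-Nash equilibrium of the sub-game over `𝔗_σ`. -/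
theorem zero_sum_subgame_nash [Countable Ω] (μ : Measure Ω) [IsProbabilityMeasure μ]
    (𝓕 : Filtration ℝ≥0∞ mΩ) (hsetup : UsualSetup μ 𝓕)
    (U : ℝ≥0∞ → ℝ≥0∞ → Ω → ℝ) (r : ℝ≥0∞ → ℝ) (hU : PayoffAssumption 𝓕 U r)
    (ε h : ℝ) (hε : 0 < ε) (hh : 0 < h)
    (σ : Ω → ℝ≥0∞) (hσ : IsStoppingTime 𝓕 (fun ω => (σ ω : WithTop ℝ≥0∞)))
    (ρbar τbar : ℕ → Ω → ℝ≥0∞)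
    (hρopt : IsOptRho1 μ 𝓕 U ε h ρbar) (hτopt : IsOptTau1 μ 𝓕 U ε h τbar)
    (happrox : ∀ (ρ₀ τ₀ : Ω → ℝ≥0∞) (hρ₀ : IsStoppingTime 𝓕 (fun ω => (ρ₀ ω : WithTop ℝ≥0∞)))
        (hτ₀ : IsStoppingTime 𝓕 (fun ω => (τ₀ ω : WithTop ℝ≥0∞))),
      (∀ᵐ ω ∂μ,
        (μ[fun ω' => U (ρ₀ ω') (evalAt (gridStrat h τbar) ρ₀ ω') ω' |
          hρ₀.measurableSpace]) ω - 2*ε < X1v μ 𝓕 U (ρ₀ ω) ω) ∧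
      (∀ᵐ ω ∂μ,
        Y1v μ 𝓕 U (τ₀ ω) ω <
          (μ[fun ω' => U (evalAt (gridStrat h ρbar) τ₀ ω') (τ₀ ω') ω' |
            hτ₀.measurableSpace]) ω + 2*ε))
    (ρσε τσε : Ω → ℝ≥0∞) (hρσε : ρσε ∈ STge 𝓕 σ) (hτσε : τσε ∈ STge 𝓕 σ)
    (hsaddle : ∀ ρ₀ τ₀ : Ω → ℝ≥0∞, ρ₀ ∈ STge 𝓕 σ → τ₀ ∈ STge 𝓕 σ →
      ∀ᵐ ω ∂μ,
        condDynkin μ hσ.measurableSpace (X1v μ 𝓕 U) (Y1v μ 𝓕 U) (Zv U) ρ₀ τσε ω - ε ≤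
          condDynkin μ hσ.measurableSpace (X1v μ 𝓕 U) (Y1v μ 𝓕 U) (Zv U) ρσε τσε ω ∧
        condDynkin μ hσ.measurableSpace (X1v μ 𝓕 U) (Y1v μ 𝓕 U) (Zv U) ρσε τσε ω ≤
          condDynkin μ hσ.measurableSpace (X1v μ 𝓕 U) (Y1v μ 𝓕 U) (Zv U) ρσε τ₀ ω + ε) :
    IsStrategyGe 𝓕 σ (ρσε, gridStrat h ρbar) ∧
    IsStrategyGe 𝓕 σ (τσε, gridStrat h τbar) ∧
    ∀ ρ τ : (Ω → ℝ≥0∞) × (ℝ≥0∞ → Ω → ℝ≥0∞),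
      IsStrategyGe 𝓕 σ ρ → IsStrategyGe 𝓕 σ τ →
      (∀ᵐ ω ∂μ,
        condPayoff μ hσ.measurableSpace U ρ (τσε, gridStrat h τbar) ω ≤
          condPayoff μ hσ.measurableSpace U (ρσε, gridStrat h ρbar)
            (τσε, gridStrat h τbar) ω + 5*ε) ∧
      (∀ᵐ ω ∂μ,
        condPayoff μ hσ.measurableSpace (fun s t ω' => -U s t ω')
            (ρσε, gridStrat h ρbar) τ ω ≤
          condPayoff μ hσ.measurableSpace (fun s t ω' => -U s t ω')
            (ρσε, gridStrat h ρbar) (τσε, gridStrat h τbar) ω + 5*ε) := by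
  obtain ⟨hμ, -⟩ := hsetup
  obtain ⟨⟨M, hM⟩, hUm, -⟩ := hU
  have hρstar := isStrategyGe_gridStrat hh (fun n => (hρopt n).1) hρσε
  have hτstar := isStrategyGe_gridStrat hh (fun n => (hτopt n).1) hτσε
  have h2ε : 0 ≤ 2 * ε := by positivity
  have hX (t : ℝ≥0∞) (_ : t ≠ ∞) (ω : Ω) :
      responseX μ 𝓕 U (gridStrat h τbar) t ω ≤ X1v μ 𝓕 U t ω + 2 * ε := by
    have happ := (happrox _ _ (isStoppingTime_const 𝓕 t) (isStoppingTime_const 𝓕 t)).1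
    rw [IsStoppingTime.measurableSpace_const] at happ
    exact (sub_lt_iff_lt_add.1 (forall_of_ae hμ happ ω)).le
  have hY (t : ℝ≥0∞) (_ : t ≠ ∞) (ω : Ω) :
      Y1v μ 𝓕 U t ω ≤ responseY μ 𝓕 U (gridStrat h ρbar) t ω + 2 * ε := by
    have happ := (happrox _ _ (isStoppingTime_const 𝓕 t) (isStoppingTime_const 𝓕 t)).2
    rw [IsStoppingTime.measurableSpace_const] at happ
    exact (forall_of_ae hμ happ ω).le
  refine ⟨hρstar, hτstar, fun ρ τ hρ hτ => ⟨ae_of_all _ fun ω => ?_, ae_of_all _ fun ω => ?_⟩⟩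
  · have hsad := (forall_of_ae hμ (hsaddle ρ.1 τσε ⟨hρ.1.1, hρ.2⟩ hτσε) ω).1
    linarith [condPayoff_le_condDynkin_add hμ hUm hM hσ hρ hτstar h2ε hX ω,
      condDynkin_le_condPayoff_add hμ hUm hM hσ hρstar hτstar h2ε hY ω]
  · have hsad := (forall_of_ae hμ (hsaddle ρσε τ.1 hρσε ⟨hτ.1.1, hτ.2⟩) ω).2
    rw [condPayoff_neg hμ hσ, condPayoff_neg hμ hσ]
    linarith [condPayoff_le_condDynkin_add hμ hUm hM hσ hρstar hτstar h2ε hX ω,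
      condDynkin_le_condPayoff_add hμ hUm hM hσ hρstar hτ h2ε hY ω]

end StoppingGames
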